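/- Let α > -1/2 and a ≥ 1. There exists a constant C, depending only on α (in particular, independent of j), such that for every integer j ≥ 1, every ξ ∈ (0,1) and all x, y > 0 one has G_{α+aj,t(ξ)}(x,y) ≤ C ((1−ξ²)/ξ)^{1/2} (xy)^{−aj−α−1/2}. -/

import Mathlib

open MeasureTheory
open scoped ENNReal NNReal

/-- One-dimensional Laguerre heat kernel of Hermite type `G^H_{α,t}(x,y)`. -/
noncomputable def lagHeatH (α t x y : ℝ) : ℝ :=
  (x * y) ^ (α + 1/2) * Real.sinh (2 * t) ^ (-1 - α) *
    ∫ s in (-1:ℝ)..1,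
      Real.exp (-(1/2) * (Real.cosh (2 * t) / Real.sinh (2 * t)) * (x ^ 2 + y ^ 2)
          - x * y * s / Real.sinh (2 * t)) *
        ((1 - s ^ 2) ^ (α - 1/2) / (2 ^ α * Real.sqrt Real.pi * Real.Gamma (α + 1/2)))

/-- Laguerre heat kernel of convolution type `G_{α,t}(x,y) = (xy)^{−α−1/2} G^H_{α,t}(x,y)`. -/
noncomputable def lagHeatC (α t x y : ℝ) : ℝ :=
  (x * y) ^ (-α - 1/2) * lagHeatH α t x y

/-- Meda's change of variable `t(ξ) = (1/2) log((1+ξ)/(1−ξ))`, `ξ ∈ (0,1)`. -/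
noncomputable def meda (ξ : ℝ) : ℝ := (1/2) * Real.log ((1 + ξ) / (1 - ξ))

/-! Under Meda's change of variable `sinh (2 t(ξ)) = 2ξ / (1 - ξ²)`. Since `cosh ≥ 1` and
`x² + y² ≥ 2xy`, the Gaussian factor of the integrand is at most
`exp (-(xy / sinh 2t) (1 + s))`, and for `β = α + aj ≥ 1/2` one has
`(1 - s²)^(β - 1/2) ≤ 2^(β - 1/2) (1 + s)^(β - 1/2)`. The `s`-integral is then dominated by a
Gamma integral, whose value `(sinh 2t / xy)^(β + 1/2) Γ(β + 1/2)` cancels the normalising factor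
`Γ(β + 1/2)` and the powers of `xy` and `sinh 2t`, leaving the `β`-independent bound
`(xy)^(-β - 1/2) / √(2π sinh 2t)`. -/

open Real Set

lemma sinh_two_mul_meda {ξ : ℝ} (h0 : -1 < ξ) (h1 : ξ < 1) :
    sinh (2 * meda ξ) = 2 * ξ / (1 - ξ ^ 2) := by
  have h1' : 1 - ξ ≠ 0 := by linarith
  have h0' : 1 + ξ ≠ 0 := by linarith
  have h2 : 1 - ξ ^ 2 ≠ 0 := by nlinarith
  rw [meda, ← mul_assoc, mul_one_div_cancel two_ne_zero, one_mul,
    sinh_log (div_pos (by linarith) (by linarith)), inv_div]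
  field_simp
  ring

lemma meda_pos {ξ : ℝ} (h0 : 0 < ξ) (h1 : ξ < 1) : 0 < meda ξ := by
  have := log_pos ((one_lt_div (sub_pos.2 h1)).2 (by linarith : 1 - ξ < 1 + ξ))
  unfold meda
  positivity

lemma lagHeat_exponent_le {K S x y s : ℝ} (hK : 1 ≤ K) (hS : 0 < S) :
    -(1/2) * (K / S) * (x ^ 2 + y ^ 2) - x * y * s / S ≤ -(x * y / S) * (1 + s) := by
  rw [← sub_nonneg]
  have key : -(x * y / S) * (1 + s) - (-(1/2) * (K / S) * (x ^ 2 + y ^ 2) - x * y * s / S) =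
      ((K - 1) * (x ^ 2 + y ^ 2) + (x - y) ^ 2) / (2 * S) := by
    field_simp
    ring
  rw [key]
  have : 0 ≤ K - 1 := by linarith
  positivity

lemma one_sub_sq_rpow_le {s p : ℝ} (hs : s ∈ Icc (-1 : ℝ) 1) (hp : 0 ≤ p) :
    (1 - s ^ 2) ^ p ≤ 2 ^ p * (1 + s) ^ p := by
  rw [show 1 - s ^ 2 = (1 - s) * (1 + s) by ring,
    mul_rpow (by linarith [hs.2]) (by linarith [hs.1])]
  exact mul_le_mul_of_nonneg_right (rpow_le_rpow (by linarith [hs.2]) (by linarith [hs.1]) hp)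
    (rpow_nonneg (by linarith [hs.1]) p)

lemma intervalIntegral_rpow_mul_exp_neg_mul_le {b c p : ℝ} (hb : 0 ≤ b) (hc : 0 < c)
    (hp : -1 < p) :
    ∫ u in (0:ℝ)..b, u ^ p * exp (-(c * u)) ≤ (1 / c) ^ (p + 1) * Gamma (p + 1) := by
  have hGamma := integral_rpow_mul_exp_neg_mul_Ioi (a := p + 1) (by linarith) hc
  rw [add_sub_cancel_right] at hGamma
  have hint : IntegrableOn (fun u : ℝ => u ^ p * exp (-(c * u))) (Ioi 0) := by
    simpa only [rpow_one, neg_mul] using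
      integrableOn_rpow_mul_exp_neg_mul_rpow hp one_pos hc
  rw [intervalIntegral.integral_of_le hb, ← hGamma]
  refine setIntegral_mono_set hint ?_ Ioc_subset_Ioi_self.eventuallyLE
  filter_upwards [ae_restrict_mem measurableSet_Ioi] with u (hu : 0 < u)
  positivity

lemma lagHeatH_integral_le {β K S x y : ℝ} (hβ : 1 / 2 ≤ β) (hK : 1 ≤ K) (hS : 0 < S)
    (hxy : 0 < x * y) :
    ∫ s in (-1:ℝ)..1, exp (-(1/2) * (K / S) * (x ^ 2 + y ^ 2) - x * y * s / S) *
        ((1 - s ^ 2) ^ (β - 1/2) / (2 ^ β * √π * Gamma (β + 1/2))) ≤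
      (S / (x * y)) ^ (β + 1/2) / √(2 * π) := by
  set c := x * y / S
  set D := 2 ^ β * √π * Gamma (β + 1/2) with hD_def
  have hc : 0 < c := div_pos hxy hS
  have hp : 0 ≤ β - 1/2 := by linarith
  have hD : 0 < D := by have := Gamma_pos_of_pos (show 0 < β + 1/2 by linarith); positivity
  have hcont₁ : Continuous fun s : ℝ =>
      exp (-(1/2) * (K / S) * (x ^ 2 + y ^ 2) - x * y * s / S) *
        ((1 - s ^ 2) ^ (β - 1/2) / D) := by
    have := continuous_rpow_const (q := β - 1/2) hp
    fun_prop
  have hcont₂ : Continuous fun s : ℝ =>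
      2 ^ (β - 1/2) / D * ((1 + s) ^ (β - 1/2) * exp (-(c * (1 + s)))) := by
    have := continuous_rpow_const (q := β - 1/2) hp
    fun_prop
  calc _ ≤ ∫ s in (-1:ℝ)..1,
        2 ^ (β - 1/2) / D * ((1 + s) ^ (β - 1/2) * exp (-(c * (1 + s)))) := by
        refine intervalIntegral.integral_mono_on (by norm_num) (hcont₁.intervalIntegrable _ _)
          (hcont₂.intervalIntegrable _ _) fun s hs => ?_
        calc _ ≤ exp (-c * (1 + s)) * (2 ^ (β - 1/2) * (1 + s) ^ (β - 1/2) / D) := by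
              gcongr
              · exact div_nonneg (rpow_nonneg (by nlinarith [hs.1, hs.2]) _) hD.le
              · exact lagHeat_exponent_le hK hS
              · exact one_sub_sq_rpow_le hs hp
          _ = _ := by rw [neg_mul]; ring
    _ = 2 ^ (β - 1/2) / D * ∫ u in (0:ℝ)..2, u ^ (β - 1/2) * exp (-(c * u)) := by
        rw [intervalIntegral.integral_const_mul,
          intervalIntegral.integral_comp_add_left (fun u => u ^ (β - 1/2) * exp (-(c * u)))]
        norm_num
    _ ≤ 2 ^ (β - 1/2) / D * ((1 / c) ^ (β - 1/2 + 1) * Gamma (β - 1/2 + 1)) := by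
        gcongr
        exact intervalIntegral_rpow_mul_exp_neg_mul_le zero_le_two hc (by linarith)
    _ = _ := by
        have hΓ : Gamma (β + 1/2) ≠ 0 := (Gamma_pos_of_pos (by linarith)).ne'
        rw [show β - 1/2 + 1 = β + 1/2 by ring, one_div_div, hD_def, rpow_sub two_pos,
          ← sqrt_eq_rpow, sqrt_mul zero_le_two]
        field_simp

lemma lagHeatC_le {β t x y : ℝ} (hβ : 1 / 2 ≤ β) (ht : 0 < t) (hx : 0 < x) (hy : 0 < y) :
    lagHeatC β t x y ≤ (x * y) ^ (-β - 1/2) / √(2 * π * sinh (2 * t)) := by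
  have hS : 0 < sinh (2 * t) := sinh_pos_iff.2 (by linarith)
  have hxy : 0 < x * y := mul_pos hx hy
  unfold lagHeatC lagHeatH
  calc _ = sinh (2 * t) ^ (-1 - β) * ∫ s in (-1:ℝ)..1,
        exp (-(1/2) * (cosh (2 * t) / sinh (2 * t)) * (x ^ 2 + y ^ 2)
            - x * y * s / sinh (2 * t)) *
          ((1 - s ^ 2) ^ (β - 1/2) / (2 ^ β * √π * Gamma (β + 1/2))) := by
        rw [← mul_assoc, ← mul_assoc, ← rpow_add hxy]
        norm_num
    _ ≤ sinh (2 * t) ^ (-1 - β) * ((sinh (2 * t) / (x * y)) ^ (β + 1/2) / √(2 * π)) := by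
        gcongr
        exact lagHeatH_integral_le hβ (one_le_cosh _) hS hxy
    _ = _ := by
        have hS' :
            sinh (2 * t) ^ (-1 - β) * sinh (2 * t) ^ (β + 1/2) = (√(sinh (2 * t)))⁻¹ := by
          rw [← rpow_add hS, sqrt_eq_rpow, ← rpow_neg hS.le]
          ring_nf
        have hxy' : (x * y) ^ (-β - 1/2) = ((x * y) ^ (β + 1/2))⁻¹ := by
          rw [← rpow_neg hxy.le]
          ring_nf
        rw [hxy', sqrt_mul' _ hS.le, div_rpow hS.le hxy.le, div_eq_mul_inv _ (_ * _), mul_inv,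
          ← hS']
        ring

/-- for `α > −1/2`, `a ≥ 1` there is `C = C(α)` (independent of `j`) with
`G_{α+aj,t(ξ)}(x,y) ≤ C ((1−ξ²)/ξ)^{1/2} (xy)^{−aj−α−1/2}` for all `j ≥ 1`, `ξ ∈ (0,1)`,
`x, y > 0`. -/
theorem stmt16 (α a : ℝ) (hα : -(1/2) < α) (ha : 1 ≤ a) :
    ∃ C : ℝ, 0 < C ∧ ∀ j : ℕ, 1 ≤ j → ∀ ξ ∈ Set.Ioo (0:ℝ) 1, ∀ x y : ℝ, 0 < x → 0 < y →
      lagHeatC (α + a * (j:ℝ)) (meda ξ) x y ≤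
        C * ((1 - ξ ^ 2) / ξ) ^ ((1:ℝ)/2) * (x * y) ^ (-(a * (j:ℝ)) - α - 1/2) := by
  refine ⟨1 / (2 * √π), by positivity, fun j hj ξ ⟨hξ0, hξ1⟩ x y hx hy => ?_⟩
  have hβ : 1 / 2 ≤ α + a * j := by
    have : (1:ℝ) ≤ j := by exact_mod_cast hj
    nlinarith
  have hξ : 0 < 1 - ξ ^ 2 := by nlinarith
  calc _ ≤ (x * y) ^ (-(α + a * j) - 1/2) / √(2 * π * sinh (2 * meda ξ)) :=
        lagHeatC_le hβ (meda_pos hξ0 hξ1) hx hy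
    _ = _ := by
        rw [sinh_two_mul_meda (by linarith) hξ1, ← sqrt_eq_rpow,
          show 2 * π * (2 * ξ / (1 - ξ ^ 2)) = (2 * √π) ^ 2 / ((1 - ξ ^ 2) / ξ) by
            rw [mul_pow, sq_sqrt pi_pos.le]; field_simp,
          sqrt_div' _ (by positivity), sqrt_sq (by positivity),
          show -(α + a * j) - 1/2 = -(a * j) - α - 1/2 by ring]
        field_simp
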